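/- Let N be a tree-based rooted phylogenetic network. Then the number of support trees of N equals the number of supporting sets for the bipartite graph J_N. -/

import Mathlib

open Relation

/-- Out-degree of a vertex in a digraph given by its arc relation. -/
noncomputable def outDeg {V : Type*} (A : V → V → Prop) (v : V) : ℕ := {u | A v u}.ncard
/-- In-degree of a vertex in a digraph given by its arc relation. -/
noncomputable def inDeg {V : Type*} (A : V → V → Prop) (v : V) : ℕ := {u | A u v}.ncard

/-- A rooted phylogenetic network on leaf set `X`. -/
structure PhyloNet (V : Type*) [Fintype V] [DecidableEq V] where
  Arc : V → V → Prop
  root : V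
  X : Finset V
  acyclic : ∀ v, ¬ Relation.TransGen Arc v v
  reach : ∀ v, Relation.ReflTransGen Arc root v
  root_out : 1 ≤ outDeg Arc root
  leaf_iff : ∀ v, v ∈ X ↔ outDeg Arc v = 0
  leaf_in : ∀ v ∈ X, inDeg Arc v = 1
  internal : ∀ v, v ≠ root → v ∉ X →
    (inDeg Arc v = 1 ∧ 2 ≤ outDeg Arc v) ∨ (2 ≤ inDeg Arc v ∧ outDeg Arc v = 1)

section Defs
variable {V : Type*} [Fintype V] [DecidableEq V]

/-- A reticulation: in-degree at least two. -/
def IsRetic (N : PhyloNet V) (v : V) : Prop := 2 ≤ inDeg N.Arc v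
/-- A tree vertex: a non-leaf vertex of in-degree at most one. -/
def IsTreeVert (N : PhyloNet V) (v : V) : Prop := v ∉ N.X ∧ inDeg N.Arc v ≤ 1
/-- An omnian: a non-leaf vertex all of whose children are reticulations. -/
def IsOmnian (N : PhyloNet V) (v : V) : Prop := v ∉ N.X ∧ ∀ u, N.Arc v u → IsRetic N u
/-- A binary network: all in- and out-degrees are at most two. -/
def IsBinary (N : PhyloNet V) : Prop := ∀ v : V, inDeg N.Arc v ≤ 2 ∧ outDeg N.Arc v ≤ 2

/-- A rooted spanning tree of `N` with the same root as `N`. -/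
def IsRSTree (N : PhyloNet V) (T : V → V → Prop) : Prop :=
  (∀ u v, T u v → N.Arc u v) ∧ (∀ v, inDeg T v = 0 ↔ v = N.root) ∧
  (∀ v, v ≠ N.root → inDeg T v = 1)

/-- A support tree: a rooted spanning tree with the same root, all of whose leaves are in `X`. -/
def IsSupportTree (N : PhyloNet V) (T : V → V → Prop) : Prop :=
  IsRSTree N T ∧ ∀ v, outDeg T v = 0 → v ∈ N.X

/-- Tree-based network. -/
def TreeBased (N : PhyloNet V) : Prop := ∃ T, IsSupportTree N T

/-- A (nonempty, repetition-free) directed path recorded as a list of vertices. -/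
def IsPathIn (A : V → V → Prop) (p : List V) : Prop := p ≠ [] ∧ p.Chain' A ∧ p.Nodup
/-- The path ends at a vertex of `X`. -/
def EndsIn (X : Finset V) (p : List V) : Prop := ∃ x ∈ X, p.getLast? = some x
/-- Pairwise vertex-disjoint family of paths. -/
def PairwiseDisj (P : Finset (List V)) : Prop :=
  ∀ p ∈ P, ∀ q ∈ P, p ≠ q → ∀ v : V, v ∈ p → v ∉ q
/-- A partition of the vertex set of `N` into vertex-disjoint directed paths
ending at leaves in `X`. -/
def IsPathPartition (N : PhyloNet V) (P : Finset (List V)) : Prop :=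
  (∀ p ∈ P, IsPathIn N.Arc p ∧ EndsIn N.X p) ∧ PairwiseDisj P ∧ ∀ v : V, ∃ p ∈ P, v ∈ p

/-- A matching in the bipartite graph with edge set `E` (edges from a first copy of `V`
to a second copy of `V`), recorded as a set of edges no two of which share an endpoint. -/
def IsMatchingOn (E : V → V → Prop) (M : Finset (V × V)) : Prop :=
  (∀ e ∈ M, E e.1 e.2) ∧ ∀ e ∈ M, ∀ f ∈ M, (e.1 = f.1 ∨ e.2 = f.2) → e = f

/-- Size of a maximum matching of the bipartite graph with edge set `E`. -/
noncomputable def maxMatching (E : V → V → Prop) : ℕ :=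
  sSup {n | ∃ M : Finset (V × V), IsMatchingOn E M ∧ M.card = n}

/-- An antichain of vertices of `N`. -/
def AntichainIn (N : PhyloNet V) (S : Finset V) : Prop :=
  ∀ u ∈ S, ∀ v ∈ S, u ≠ v → ¬ Relation.TransGen N.Arc u v

/-- The antichain-to-leaf property: from every antichain there are pairwise
vertex-disjoint directed paths to leaves, one starting at each antichain element. -/
def AntichainToLeaf (N : PhyloNet V) : Prop :=
  ∀ S : Finset V, AntichainIn N S →
    ∃ f : V → List V,
      (∀ s ∈ S, IsPathIn N.Arc (f s) ∧ (f s).head? = some s ∧ EndsIn N.X (f s)) ∧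
      ∀ s ∈ S, ∀ t ∈ S, s ≠ t → ∀ v : V, v ∈ f s → v ∉ f t

/-- A temporal network: a real labelling strictly increasing along tree arcs and
constant along reticulation arcs. -/
def Temporal (N : PhyloNet V) : Prop :=
  ∃ l : V → ℝ, ∀ u v, N.Arc u v →
    (IsRetic N v → l u = l v) ∧ (¬ IsRetic N v → l u < l v)

/-- `N'` is a binary refinement of `N`, witnessed by the contraction map `φ`:
`N` is obtained from the binary network `N'` by contracting the arcs whose endpoints
are identified by `φ`. -/
def IsBinRefinement {V' : Type*} [Fintype V'] [DecidableEq V']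
    (N' : PhyloNet V') (N : PhyloNet V) (φ : V' → V) : Prop :=
  IsBinary N' ∧ Function.Surjective φ ∧ φ N'.root = N.root ∧
  N'.X.image φ = N.X ∧ Set.InjOn φ ↑N'.X ∧
  (∀ u v : V, N.Arc u v ↔ ∃ u' v', φ u' = u ∧ φ v' = v ∧ N'.Arc u' v' ∧ φ u' ≠ φ v') ∧
  (∀ a b : V', φ a = φ b →
    Relation.ReflTransGen (fun x y => (N'.Arc x y ∨ N'.Arc y x) ∧ φ x = φ y) a b)

/-- Edge of the bipartite graph `B_N` between omnians and reticulations. -/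
def BEdge (N : PhyloNet V) (o r : V) : Prop := IsOmnian N o ∧ IsRetic N r ∧ N.Arc o r
/-- Edge of the bipartite graph `Z_N` between tree vertices with a reticulation child
and reticulations. -/
def ZEdge (N : PhyloNet V) (t r : V) : Prop :=
  IsTreeVert N t ∧ (∃ r', N.Arc t r' ∧ IsRetic N r') ∧ IsRetic N r ∧ N.Arc t r

/-- `R_t`: reticulations with no reticulation parent. -/
def Rt (N : PhyloNet V) (v : V) : Prop := IsRetic N v ∧ ∀ u, N.Arc u v → ¬ IsRetic N u
/-- `Q_t`: vertices with a child in `R_t`. -/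
def Qt (N : PhyloNet V) (v : V) : Prop := ∃ r, N.Arc v r ∧ Rt N r
/-- Edge of the bipartite graph `J_N`. -/
def JEdge (N : PhyloNet V) (q r : V) : Prop := Qt N q ∧ Rt N r ∧ N.Arc q r

/-- A supporting set for `J_N`. -/
def IsSupportingSet (N : PhyloNet V) (E : Finset (V × V)) : Prop :=
  (∀ e ∈ E, JEdge N e.1 e.2) ∧
  (∀ q, Qt N q → IsOmnian N q → ∃ e ∈ E, e.1 = q) ∧
  (∀ r, Rt N r → ∃! e : V × V, e ∈ E ∧ e.2 = r)

/-- An arboreal arc: `u` is a reticulation, or `v` is a tree vertex or a leaf. -/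
def ArborealArc (N : PhyloNet V) (u v : V) : Prop :=
  N.Arc u v ∧ (IsRetic N u ∨ ¬ IsRetic N v)

/-- The number of support trees of `N`, identified with their arc sets. -/
noncomputable def supCount (N : PhyloNet V) : ℕ :=
  {A' : Finset (V × V) | IsSupportTree N (fun u v => (u, v) ∈ A')}.ncard

/-- The bipartite graph `J_N`, as a simple graph on `Q_t ∪ R_t`. -/
def Jgraph (N : PhyloNet V) : SimpleGraph {v : V // Qt N v ∨ Rt N v} where
  Adj a b := JEdge N a.1 b.1 ∨ JEdge N b.1 a.1
  symm := by constructor; intro a b h; tauto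
  loopless := by
    constructor; rintro a (⟨_, _, h⟩ | ⟨_, _, h⟩) <;> exact N.acyclic _ (Relation.TransGen.single h)

/-- Degree in `J_N`. -/
noncomputable def Jdeg (N : PhyloNet V) (a : {v : V // Qt N v ∨ Rt N v}) : ℕ :=
  ((Jgraph N).neighborSet a).ncard

end Defs

/-- A rooted tree (equivalently, a subdivision of a rooted tree): a rooted digraph
in which every non-root vertex has in-degree one and everything is reachable
from the root. -/
structure RootedDirTree (V : Type*) [Fintype V] [DecidableEq V] where
  Arc : V → V → Prop
  root : V
  acyclic : ∀ v, ¬ Relation.TransGen Arc v v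
  reach : ∀ v, Relation.ReflTransGen Arc root v
  root_in : inDeg Arc root = 0
  in_one : ∀ v, v ≠ root → inDeg Arc v = 1
/-!
In a tree-based network every support tree `T` contains all arcs into non-reticulations (they
are the only arc into their head) and all arcs out of reticulations (they are the only arc out
of a non-leaf). A reticulation with a reticulation parent therefore gets that parent in `T`,
and only the parents of the reticulations in `R_t` are left free. Hence `T` is determined by
its arcs into `R_t`, which form a supporting set (an omnian needs a child in `T`); conversely
every supporting set, completed by the forced arcs, is a support tree.
-/

section Degrees

variable {V : Type*} {A : V → V → Prop} {u v w : V}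

lemma inDeg_eq_one_iff : inDeg A v = 1 ↔ ∃ p, ∀ u, A u v ↔ u = p := by
  simp [inDeg, Set.ext_iff]

variable [Finite V]

lemma inDeg_eq_zero_iff : inDeg A v = 0 ↔ ∀ u, ¬ A u v := by
  rw [inDeg, Set.ncard_eq_zero]
  simp [Set.eq_empty_iff_forall_notMem]

lemma outDeg_eq_zero_iff : outDeg A v = 0 ↔ ∀ w, ¬ A v w := by
  rw [outDeg, Set.ncard_eq_zero]
  simp [Set.eq_empty_iff_forall_notMem]

lemma eq_of_inDeg_le_one (h : inDeg A v ≤ 1) (hu : A u v) (hw : A w v) : u = w :=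
  (Set.ncard_le_one_iff (Set.toFinite _)).mp h hu hw

lemma eq_of_outDeg_le_one (h : outDeg A u ≤ 1) (hv : A u v) (hw : A u w) : v = w :=
  (Set.ncard_le_one_iff (Set.toFinite _)).mp h hv hw

end Degrees

namespace PhyloNet

variable {V : Type*} [Fintype V] [DecidableEq V] (N : PhyloNet V) {u v w : V}

lemma not_arc_root (u : V) : ¬ N.Arc u N.root := fun h =>
  N.acyclic N.root (Relation.TransGen.tail' (N.reach u) h)

lemma ne_root_of_arc (h : N.Arc u v) : v ≠ N.root := by
  rintro rfl
  exact N.not_arc_root u h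

lemma notMem_X_of_arc (h : N.Arc u v) : u ∉ N.X := fun hu =>
  outDeg_eq_zero_iff.mp ((N.leaf_iff u).mp hu) v h

lemma exists_arc_of_ne_root (hv : v ≠ N.root) : ∃ u, N.Arc u v := by
  by_contra! h
  have h0 : inDeg N.Arc v = 0 := inDeg_eq_zero_iff.mpr h
  by_cases hX : v ∈ N.X
  · have := N.leaf_in v hX
    omega
  · rcases N.internal v hv hX with h1 | h1 <;> omega

lemma exists_arc_of_notMem_X (hv : v ∉ N.X) : ∃ w, N.Arc v w := by
  by_contra! h
  exact hv ((N.leaf_iff v).mpr (outDeg_eq_zero_iff.mpr h))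

variable {N}

lemma ne_root_of_isRetic (h : IsRetic N v) : v ≠ N.root := by
  rintro rfl
  have : inDeg N.Arc N.root = 0 := inDeg_eq_zero_iff.mpr N.not_arc_root
  unfold IsRetic at h
  omega

lemma parent_eq_of_not_isRetic (hv : ¬ IsRetic N v) (hu : N.Arc u v) (hw : N.Arc w v) :
    u = w :=
  eq_of_inDeg_le_one (by unfold IsRetic at hv; omega) hu hw

lemma child_eq_of_isRetic (hu : IsRetic N u) (hv : N.Arc u v) (hw : N.Arc u w) : v = w := by
  rcases N.internal u (ne_root_of_isRetic hu) (N.notMem_X_of_arc hv) with h | h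
  · unfold IsRetic at hu
    omega
  · exact eq_of_outDeg_le_one h.2.le hv hw

end PhyloNet

namespace IsSupportTree

open PhyloNet

variable {V : Type*} [Fintype V] [DecidableEq V] {N : PhyloNet V} {T : V → V → Prop}
  {u v w : V}

lemma arc (hT : IsSupportTree N T) (h : T u v) : N.Arc u v := hT.1.1 u v h

lemma exists_parent (hT : IsSupportTree N T) (hv : v ≠ N.root) : ∃ p, ∀ u, T u v ↔ u = p :=
  inDeg_eq_one_iff.mp (hT.1.2.2 v hv)

lemma eq_of_apply (hT : IsSupportTree N T) (hu : T u v) (hw : T w v) : u = w := by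
  obtain ⟨p, hp⟩ := hT.exists_parent (N.ne_root_of_arc (hT.arc hu))
  rw [(hp u).mp hu, (hp w).mp hw]

lemma exists_child (hT : IsSupportTree N T) (hv : v ∉ N.X) : ∃ w, T v w := by
  by_contra! h
  exact hv (hT.2 v (outDeg_eq_zero_iff.mpr h))

lemma apply_of_not_isRetic (hT : IsSupportTree N T) (h : N.Arc u v) (hv : ¬ IsRetic N v) :
    T u v := by
  obtain ⟨p, hp⟩ := hT.exists_parent (N.ne_root_of_arc h)
  have hpv : T p v := (hp p).mpr rfl
  rwa [parent_eq_of_not_isRetic hv h (hT.arc hpv)]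

lemma apply_of_isRetic (hT : IsSupportTree N T) (hu : IsRetic N u) (h : N.Arc u v) :
    T u v := by
  obtain ⟨w, hw⟩ := hT.exists_child (N.notMem_X_of_arc h)
  rwa [child_eq_of_isRetic hu (hT.arc hw) h] at hw

lemma rt_of_apply (hT : IsSupportTree N T) (h : T u v) (hu : ¬ IsRetic N u)
    (hv : IsRetic N v) : Rt N v := by
  refine ⟨hv, fun p hp hpr => hu ?_⟩
  rwa [← hT.eq_of_apply (hT.apply_of_isRetic hpr hp) h]

end IsSupportTree

namespace TreeBased

open PhyloNet

variable {V : Type*} [Fintype V] [DecidableEq V] {N : PhyloNet V} {u v w : V}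

lemma isRetic_parent_eq (hN : TreeBased N) (hu : IsRetic N u) (hw : IsRetic N w)
    (hua : N.Arc u v) (hwa : N.Arc w v) : u = w :=
  have ⟨_, hT⟩ := hN
  hT.eq_of_apply (hT.apply_of_isRetic hu hua) (hT.apply_of_isRetic hw hwa)

lemma qt_of_isOmnian (hN : TreeBased N) (ho : IsOmnian N v) (hv : ¬ IsRetic N v) : Qt N v := by
  obtain ⟨_, hT⟩ := hN
  obtain ⟨w, hw⟩ := hT.exists_child ho.1
  exact ⟨w, hT.arc hw, hT.rt_of_apply hw hv (ho.2 w (hT.arc hw))⟩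

end TreeBased

section Bijection

open PhyloNet

variable {V : Type*} [Fintype V] [DecidableEq V] {N : PhyloNet V}

-- The first two disjuncts give the arcs forced into every support tree.
def supportTreeOf (N : PhyloNet V) (S : V → V → Prop) (u v : V) : Prop :=
  N.Arc u v ∧ (¬ IsRetic N v ∨ IsRetic N u ∨ (Rt N v ∧ S u v))

open Classical in
noncomputable def supportingSetOf (N : PhyloNet V) (A : Finset (V × V)) : Finset (V × V) :=
  A.filter fun e => Rt N e.2

lemma mem_supportingSetOf {A : Finset (V × V)} {e : V × V} :
    e ∈ supportingSetOf N A ↔ e ∈ A ∧ Rt N e.2 := by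
  classical
  exact Finset.mem_filter

lemma supportTreeOf_congr {S S' : V → V → Prop} (h : ∀ u v, Rt N v → (S u v ↔ S' u v)) :
    supportTreeOf N S = supportTreeOf N S' := by
  ext u v
  exact and_congr_right fun _ => or_congr_right (or_congr_right (and_congr_right (h u v)))

lemma IsSupportTree.supportTreeOf_eq {T : V → V → Prop} (hT : IsSupportTree N T) :
    supportTreeOf N T = T := by
  ext u v
  constructor
  · rintro ⟨h, hv | hu | ⟨-, hS⟩⟩
    · exact hT.apply_of_not_isRetic h hv
    · exact hT.apply_of_isRetic hu h
    · exact hS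
  · intro h
    refine ⟨hT.arc h, or_iff_not_imp_left.mpr fun hv => or_iff_not_imp_left.mpr fun hu => ?_⟩
    exact ⟨hT.rt_of_apply h hu (not_not.mp hv), h⟩

lemma IsSupportTree.supportTreeOf_supportingSetOf {A : Finset (V × V)}
    (hA : IsSupportTree N (fun u v => (u, v) ∈ A)) :
    supportTreeOf N (fun u v => (u, v) ∈ supportingSetOf N A) = fun u v => (u, v) ∈ A := by
  rw [← hA.supportTreeOf_eq]
  exact supportTreeOf_congr fun u v hv => by simp [mem_supportingSetOf, hv]

lemma IsSupportTree.isSupportingSet_supportingSetOf {A : Finset (V × V)}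
    (hA : IsSupportTree N (fun u v => (u, v) ∈ A)) :
    IsSupportingSet N (supportingSetOf N A) := by
  refine ⟨fun e he => ?_, fun q hq ho => ?_, fun r hr => ?_⟩
  · obtain ⟨heA, hr⟩ := mem_supportingSetOf.mp he
    exact ⟨⟨e.2, hA.arc heA, hr⟩, hr, hA.arc heA⟩
  · obtain ⟨r, hqr, hr⟩ := hq
    obtain ⟨w, hw⟩ := hA.exists_child ho.1
    have hw_rt : Rt N w := hA.rt_of_apply hw (hr.2 q hqr) (ho.2 w (hA.arc hw))
    exact ⟨(q, w), mem_supportingSetOf.mpr ⟨hw, hw_rt⟩, rfl⟩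
  · obtain ⟨p, hp⟩ := hA.exists_parent (ne_root_of_isRetic hr.1)
    refine ⟨(p, r), ⟨mem_supportingSetOf.mpr ⟨(hp p).mpr rfl, hr⟩, rfl⟩, ?_⟩
    rintro ⟨u, _⟩ ⟨he, rfl⟩
    rw [(hp u).mp (mem_supportingSetOf.mp he).1]

lemma IsSupportTree.eq_of_supportingSetOf_eq {A B : Finset (V × V)}
    (hA : IsSupportTree N (fun u v => (u, v) ∈ A))
    (hB : IsSupportTree N (fun u v => (u, v) ∈ B))
    (h : supportingSetOf N A = supportingSetOf N B) : A = B := by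
  have hrel : (fun u v => (u, v) ∈ A) = fun u v => (u, v) ∈ B := by
    rw [← hA.supportTreeOf_supportingSetOf, ← hB.supportTreeOf_supportingSetOf, h]
  ext ⟨u, v⟩
  exact iff_of_eq (congrFun₂ hrel u v)

variable {E : Finset (V × V)}

lemma exists_parent_supportTreeOf (hN : TreeBased N) (hE : IsSupportingSet N E) {v : V}
    (hv : v ≠ N.root) :
    ∃ p, ∀ u, supportTreeOf N (fun u v => (u, v) ∈ E) u v ↔ u = p := by
  by_cases hv_ret : IsRetic N v
  · by_cases hv_rt : Rt N v
    · obtain ⟨e, ⟨he, rfl⟩, huniq⟩ := hE.2.2 v hv_rt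
      refine ⟨e.1, fun u => ⟨?_, ?_⟩⟩
      · rintro ⟨h, hv' | hu | ⟨-, hS⟩⟩
        · exact absurd hv_ret hv'
        · exact absurd hu (hv_rt.2 u h)
        · exact congrArg Prod.fst (huniq (u, e.2) ⟨hS, rfl⟩)
      · rintro rfl
        exact ⟨(hE.1 e he).2.2, Or.inr (Or.inr ⟨hv_rt, he⟩)⟩
    · obtain ⟨p, hp, hp_ret⟩ : ∃ p, N.Arc p v ∧ IsRetic N p := by
        by_contra! h
        exact hv_rt ⟨hv_ret, h⟩
      refine ⟨p, fun u => ⟨?_, ?_⟩⟩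
      · rintro ⟨h, hv' | hu | ⟨hv_rt', -⟩⟩
        · exact absurd hv_ret hv'
        · exact hN.isRetic_parent_eq hu hp_ret h hp
        · exact absurd hv_rt' hv_rt
      · rintro rfl
        exact ⟨hp, Or.inr (Or.inl hp_ret)⟩
  · obtain ⟨p, hp⟩ := N.exists_arc_of_ne_root hv
    refine ⟨p, fun u => ⟨fun h => parent_eq_of_not_isRetic hv_ret h.1 hp, ?_⟩⟩
    rintro rfl
    exact ⟨hp, Or.inl hv_ret⟩

lemma exists_child_supportTreeOf (hN : TreeBased N) (hE : IsSupportingSet N E) {v : V}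
    (hv : v ∉ N.X) : ∃ w, supportTreeOf N (fun u v => (u, v) ∈ E) v w := by
  by_cases h : ∃ w, N.Arc v w ∧ ¬ IsRetic N w
  · obtain ⟨w, hw, hw_ret⟩ := h
    exact ⟨w, hw, Or.inl hw_ret⟩
  · have ho : IsOmnian N v := ⟨hv, fun w hw => by_contra fun hw_ret => h ⟨w, hw, hw_ret⟩⟩
    by_cases hv_ret : IsRetic N v
    · obtain ⟨w, hw⟩ := N.exists_arc_of_notMem_X hv
      exact ⟨w, hw, Or.inr (Or.inl hv_ret)⟩
    · obtain ⟨e, he, rfl⟩ := hE.2.1 v (hN.qt_of_isOmnian ho hv_ret) ho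
      obtain ⟨-, hr, harc⟩ := hE.1 e he
      exact ⟨e.2, harc, Or.inr (Or.inr ⟨hr, he⟩)⟩

lemma isSupportTree_supportTreeOf (hN : TreeBased N) (hE : IsSupportingSet N E) :
    IsSupportTree N (supportTreeOf N (fun u v => (u, v) ∈ E)) := by
  refine ⟨⟨fun u v h => h.1, fun v => ⟨fun h0 => ?_, ?_⟩,
    fun v hv => inDeg_eq_one_iff.mpr (exists_parent_supportTreeOf hN hE hv)⟩, fun v h0 => ?_⟩
  · by_contra hv
    obtain ⟨p, hp⟩ := exists_parent_supportTreeOf hN hE hv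
    exact inDeg_eq_zero_iff.mp h0 p ((hp p).mpr rfl)
  · rintro rfl
    exact inDeg_eq_zero_iff.mpr fun u h => N.not_arc_root u h.1
  · by_contra hX
    obtain ⟨w, hw⟩ := exists_child_supportTreeOf hN hE hX
    exact outDeg_eq_zero_iff.mp h0 w hw

lemma exists_supportTree_supportingSetOf_eq (hN : TreeBased N) (hE : IsSupportingSet N E) :
    ∃ A : Finset (V × V),
      IsSupportTree N (fun u v => (u, v) ∈ A) ∧ supportingSetOf N A = E := by
  classical
  let A := Finset.univ.filter fun e : V × V => supportTreeOf N (fun u v => (u, v) ∈ E) e.1 e.2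
  have hA : (fun u v => (u, v) ∈ A) = supportTreeOf N (fun u v => (u, v) ∈ E) := by
    ext u v
    simp [A]
  refine ⟨A, hA ▸ isSupportTree_supportTreeOf hN hE, ?_⟩
  ext e
  rw [mem_supportingSetOf,
    show e ∈ A ↔ supportTreeOf N (fun u v => (u, v) ∈ E) e.1 e.2 by simp [A]]
  constructor
  · rintro ⟨⟨harc, hv | hu | ⟨-, he⟩⟩, hr⟩
    · exact absurd hr.1 hv
    · exact absurd hu (hr.2 _ harc)
    · exact he
  · intro he
    obtain ⟨-, hr, harc⟩ := hE.1 e he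
    exact ⟨⟨harc, Or.inr (Or.inr ⟨hr, he⟩)⟩, hr⟩

end Bijection

/-- the number of support trees of a tree-based network equals the
number of supporting sets for `J_N`. -/
theorem stmt17 {V : Type*} [Fintype V] [DecidableEq V] (N : PhyloNet V)
    (hN : TreeBased N) :
    supCount N = {E : Finset (V × V) | IsSupportingSet N E}.ncard := by
  refine Set.ncard_congr (fun A _ => supportingSetOf N A)
    (fun A hA => IsSupportTree.isSupportingSet_supportingSetOf hA)
    (fun A B hA hB => IsSupportTree.eq_of_supportingSetOf_eq hA hB) fun E hE => ?_
  obtain ⟨A, hA, rfl⟩ := exists_supportTree_supportingSetOf_eq hN hE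
  exact ⟨A, hA, rfl⟩
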